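/- arXiv:1907.12438 — 3 statements merged into one kernel-verified Lean document; each statement's English description precedes it below -/
import Mathlib

section
/- For any λ ≥ 1, the sum over k ≥ 0 of (1 - (1 - 4^{-(k+1)})^λ) is at most (1 + ln λ)/ln 4 + 1. -/
/-- For any `λ = L ≥ 1`,
`Σ_{k≥0} (1 - (1 - 4^{-(k+1)})^L) ≤ (1 + ln L)/ln 4 + 1`. -/
theorem sum_tail_prob_le (L : ℕ) (hL : 1 ≤ L) :
    ∑' k : ℕ, (1 - (1 - (4 : ℝ) ^ (-((k : ℤ) + 1))) ^ L)
      ≤ (1 + Real.log L) / Real.log 4 + 1 := by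
  set f : ℕ → ℝ := fun k => 1 - (1 - (4 : ℝ) ^ (-((k : ℤ) + 1))) ^ L with hf
  have hx : ∀ k : ℕ, (4 : ℝ) ^ (-((k : ℤ) + 1)) = (1/4 : ℝ) ^ (k + 1) := by
    intro k
    rw [show -((k:ℤ)+1) = -(((k+1:ℕ)):ℤ) by push_cast; ring, zpow_neg, zpow_natCast]
    rw [one_div, inv_pow]
  have hx0 : ∀ k : ℕ, 0 < (1/4 : ℝ) ^ (k + 1) := fun k => by positivity
  have hx1 : ∀ k : ℕ, (1/4 : ℝ) ^ (k + 1) ≤ 1 := fun k =>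
    pow_le_one₀ (by norm_num) (by norm_num)
  have hfle : ∀ k : ℕ, f k ≤ (L : ℝ) * (1/4 : ℝ) ^ (k + 1) := by
    intro k
    have hb := one_add_mul_le_pow (a := -((1/4:ℝ)^(k+1))) (by nlinarith [hx1 k, hx0 k]) L
    rw [mul_neg, ← sub_eq_add_neg, ← sub_eq_add_neg] at hb
    simp only [hf, hx k]
    linarith
  have hf0 : ∀ k : ℕ, 0 ≤ f k := by
    intro k
    have : (1 - (1/4 : ℝ) ^ (k + 1)) ^ L ≤ 1 :=
      pow_le_one₀ (by nlinarith [hx1 k]) (by nlinarith [hx0 k])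
    simp only [hf, hx k]
    linarith
  have hf1 : ∀ k : ℕ, f k ≤ 1 := by
    intro k
    have : (0:ℝ) ≤ (1 - (1/4 : ℝ) ^ (k + 1)) ^ L :=
      pow_nonneg (by nlinarith [hx1 k]) L
    simp only [hf, hx k]
    linarith
  have hgsum : Summable (fun k : ℕ => (L : ℝ) * (1/4 : ℝ) ^ (k + 1)) := by
    apply Summable.mul_left
    exact (summable_geometric_of_lt_one (by norm_num) (by norm_num)).comp_injective
      (add_left_injective 1)
  have hsum : Summable f := Summable.of_nonneg_of_le hf0 hfle hgsum
  set K : ℕ := ⌈Real.log L / Real.log 4⌉₊ with hKdef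
  have hlog4 : (0:ℝ) < Real.log 4 := Real.log_pos (by norm_num)
  have hlogL : (0:ℝ) ≤ Real.log L := Real.log_nonneg (by exact_mod_cast hL)
  have hL4K : (L : ℝ) ≤ 4 ^ K := by
    have h1 : Real.log L / Real.log 4 ≤ (K : ℝ) := Nat.le_ceil _
    have h2 : Real.log L ≤ (K : ℝ) * Real.log 4 := by
      rw [div_le_iff₀ hlog4] at h1; linarith
    have hLpos : (0:ℝ) < L := by exact_mod_cast hL
    have := (Real.log_le_log_iff hLpos (by positivity : (0:ℝ) < 4 ^ K)).mp
      (by rwa [Real.log_pow])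
    exact this
  have hKle : (K : ℝ) ≤ Real.log L / Real.log 4 + 1 :=
    (Nat.ceil_lt_add_one (by positivity)).le
  -- split the sum
  have hsplit := (Summable.sum_add_tsum_nat_add K hsum).symm
  have hhead : ∑ i ∈ Finset.range K, f i ≤ (K : ℝ) := by
    calc ∑ i ∈ Finset.range K, f i ≤ ∑ i ∈ Finset.range K, (1:ℝ) :=
          Finset.sum_le_sum fun i _ => hf1 i
      _ = K := by simp
  have htail : ∑' i : ℕ, f (i + K) ≤ 1/3 := by
    have hb : ∑' i : ℕ, f (i + K) ≤ ∑' i : ℕ, (L : ℝ) * (1/4 : ℝ) ^ (i + K + 1) := by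
      apply Summable.tsum_le_tsum (fun i => hfle (i + K)) (hsum.comp_injective (add_left_injective K))
      exact (hgsum.comp_injective (add_left_injective K))
    have hcalc : ∑' i : ℕ, (L : ℝ) * (1/4 : ℝ) ^ (i + K + 1)
        = (L : ℝ) * (1/4 : ℝ) ^ (K + 1) * (4/3) := by
      have : ∀ i : ℕ, (L : ℝ) * (1/4 : ℝ) ^ (i + K + 1)
          = ((L : ℝ) * (1/4 : ℝ) ^ (K + 1)) * (1/4 : ℝ) ^ i := by
        intro i; ring
      rw [tsum_congr this, tsum_mul_left, tsum_geometric_of_lt_one (by norm_num) (by norm_num)]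
      norm_num
    have hlast : (L : ℝ) * (1/4 : ℝ) ^ (K + 1) * (4/3) ≤ 1/3 := by
      have h4K : ((1/4 : ℝ) ^ K) * (4:ℝ)^K = 1 := by
        rw [← mul_pow]; norm_num
      have hp : (0:ℝ) < (1/4:ℝ)^K := by positivity
      have : (L : ℝ) * (1/4 : ℝ) ^ K ≤ 1 := by
        calc (L : ℝ) * (1/4 : ℝ) ^ K ≤ (4:ℝ)^K * (1/4:ℝ)^K :=
              mul_le_mul_of_nonneg_right hL4K hp.le
          _ = 1 := by rw [mul_comm]; exact h4K
      have hstep : (L:ℝ) * (1/4:ℝ) ^ (K+1) * (4/3) = (L:ℝ) * (1/4:ℝ) ^ K * (1/3) := by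
        rw [pow_succ]; ring
      rw [hstep]; nlinarith
    linarith
  rw [hsplit]
  have hfinal : (K : ℝ) + 1/3 ≤ (1 + Real.log L) / Real.log 4 + 1 := by
    have hlog43 : Real.log 4 ≤ 3 := by
      have := Real.log_le_sub_one_of_pos (by norm_num : (0:ℝ) < 4)
      linarith
    have h13 : (1:ℝ)/3 ≤ 1 / Real.log 4 :=
      one_div_le_one_div_of_le hlog4 hlog43
    have : (1 + Real.log L) / Real.log 4 = 1 / Real.log 4 + Real.log L / Real.log 4 := by
      ring
    rw [this]
    linarith
  linarith
end

section
/- Let μ, λ be positive integers with μ/λ ≥ 1/(2e), let ε ∈ (0,1) be a constant, set α = 2e(1+ε)(μ/λ) - 1 and assume α ≥ ε and α ≤ 1. If p ∈ [0,1] satisfies p ≤ (1-√α)/(2e), then (λ/e)·(1 - 2p(1-p)) ≥ μ(1+ε). -/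
/-- If `μ/λ ≥ 1/(2e)`, `α = 2e(1+ε)(μ/λ) - 1` with `ε ≤ α ≤ 1`, and
`p ≤ (1-√α)/(2e)`, then `(λ/e)(1 - 2p(1-p)) ≥ μ(1+ε)`. -/
theorem expected_C_plus_D_large_high_pressure (μ L : ℕ) (hμ : 0 < μ) (hL : 0 < L)
    (hsel : (μ : ℝ) / L ≥ 1 / (2 * Real.exp 1))
    (ε : ℝ) (hε0 : 0 < ε) (hε1 : ε < 1)
    (α : ℝ) (hα : α = 2 * Real.exp 1 * (1 + ε) * ((μ : ℝ) / L) - 1)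
    (hαε : α ≥ ε) (hα1 : α ≤ 1)
    (p : ℝ) (hp0 : 0 ≤ p) (hp1 : p ≤ 1)
    (hp : p ≤ (1 - Real.sqrt α) / (2 * Real.exp 1)) :
    (L : ℝ) / Real.exp 1 * (1 - 2 * p * (1 - p)) ≥ μ * (1 + ε) := by
  have hL' : (0 : ℝ) < L := by exact_mod_cast hL
  have he : (2 : ℝ) < Real.exp 1 := by
    have := Real.exp_one_gt_d9; linarith
  set e := Real.exp 1 with he'
  set s := Real.sqrt α with hs'
  have hα0 : (0 : ℝ) ≤ α := le_trans hε0.le hαε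
  have hs0 : 0 ≤ s := Real.sqrt_nonneg α
  have hs2 : s ^ 2 = α := Real.sq_sqrt hα0
  have hs1 : s ≤ 1 := by nlinarith
  have hp' : 2 * e * p ≤ 1 - s := by
    rw [le_div_iff₀ (by linarith)] at hp
    linarith
  have key : 4 * p * (1 - p) ≤ 1 - α := by
    nlinarith [mul_nonneg hp0 (sub_nonneg.mpr hp1), mul_nonneg hp0 hs0,
      mul_nonneg (mul_nonneg hp0 hp0) hs0]
  have hμε : (μ : ℝ) * (1 + ε) = L * (1 + α) / (2 * e) := by
    rw [hα]; field_simp; ring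
  have heq : (L : ℝ) / e * (1 - 2 * p * (1 - p))
      = L * (2 * (1 - 2 * p * (1 - p))) / (2 * e) := by
    field_simp
  rw [hμε, heq, ge_iff_le, div_le_div_iff_of_pos_right (by linarith)]
  nlinarith [mul_le_mul_of_nonneg_left key hL'.le]
end

section
/- Let μ be an even positive integer, γ* ∈ (0, 1/2), θ = γ*μ (so that μ/2 - θ = μ(1/2 - γ*)), and let X be an integer-valued random variable taking values in {0,...,μ} with symmetric distribution about μ/2 (i.e., Pr(X = μ/2 - i) = Pr(X = μ/2 + i) for all i ∈ [μ/2]) and Var[X] ≥ c·μ² for some c ∈ ℝ with c > (1/2 - γ*)². Then Pr(X ≤ θ) ≥ 2(c - (1/2-γ*)²)/(1 - 4(1/2-γ*)²). -/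
set_option maxHeartbeats 1600000 in
/-- For a symmetric integer-valued random variable `X` on `{0,…,μ}` with
`Var[X] ≥ cμ²`, the probability `Pr(X ≤ θ)` with `μ/2 - θ = μ(1/2 - γ*)` is at least
`2(c - (1/2-γ*)²)/(1 - 4(1/2-γ*)²)`. -/
theorem tail_prob_lower_bound (μ : ℕ) (hμ : 0 < μ) (hμe : Even μ)
    (γs : ℝ) (hγ0 : 0 < γs) (hγ1 : γs < 1 / 2)
    (θ : ℝ) (hθ : (μ : ℝ) / 2 - θ = μ * (1 / 2 - γs))
    (c : ℝ) (hc : c > (1 / 2 - γs) ^ 2)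
    (f : ℕ → ℝ) (hf0 : ∀ i, 0 ≤ f i)
    (hsum : ∑ i ∈ Finset.range (μ + 1), f i = 1)
    (hsymm : ∀ i ≤ μ / 2, f (μ / 2 - i) = f (μ / 2 + i))
    (hvar : ∑ i ∈ Finset.range (μ + 1), f i * ((i : ℝ) - μ / 2) ^ 2 ≥ c * μ ^ 2) :
    ∑ i ∈ (Finset.range (μ + 1)).filter (fun i : ℕ => (i : ℝ) ≤ θ), f i
      ≥ 2 * (c - (1 / 2 - γs) ^ 2) / (1 - 4 * (1 / 2 - γs) ^ 2) := by
  have hμR : (0:ℝ) < μ := by exact_mod_cast hμ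
  set s : ℝ := 1/2 - γs with hs
  clear_value s
  have hs0 : 0 < s := by rw [hs]; linarith
  have hs1 : s < 1/2 := by rw [hs]; linarith
  have hθval : θ = (μ:ℝ)/2 - μ*s := by linarith
  have hθpos : 0 < θ := by nlinarith
  have hθlt : θ < (μ:ℝ)/2 := by nlinarith
  have hμ2 : μ/2 + μ/2 = μ := by
    obtain ⟨k, hk⟩ := hμe; omega
  have hfsymm : ∀ i ≤ μ, f i = f (μ - i) := by
    intro i hi
    rcases le_or_gt i (μ/2) with h | h
    · have h2 := hsymm (μ/2 - i) (by omega)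
      rw [show μ/2 - (μ/2 - i) = i by omega, show μ/2 + (μ/2 - i) = μ - i by omega] at h2
      exact h2
    · have h2 := hsymm (i - μ/2) (by omega)
      rw [show μ/2 - (i - μ/2) = μ - i by omega, show μ/2 + (i - μ/2) = i by omega] at h2
      exact h2.symm
  set L := (Finset.range (μ+1)).filter (fun i : ℕ => (i:ℝ) ≤ θ) with hL
  set U := (Finset.range (μ+1)).filter (fun i : ℕ => (μ:ℝ) - θ ≤ i) with hU
  have hUL : ∑ i ∈ U, f i = ∑ i ∈ L, f i := by
    apply Finset.sum_nbij' (fun i => μ - i) (fun i => μ - i)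
    · intro a ha
      rw [hU, Finset.mem_filter, Finset.mem_range] at ha
      rw [hL, Finset.mem_filter, Finset.mem_range]
      have haμ : a ≤ μ := by omega
      constructor
      · omega
      · rw [Nat.cast_sub haμ]; linarith [ha.2]
    · intro a ha
      rw [hL, Finset.mem_filter, Finset.mem_range] at ha
      rw [hU, Finset.mem_filter, Finset.mem_range]
      have haμ : a ≤ μ := by omega
      constructor
      · omega
      · rw [Nat.cast_sub haμ]; linarith [ha.2]
    · intro a ha
      rw [hU, Finset.mem_filter, Finset.mem_range] at ha
      omega
    · intro a ha
      rw [hL, Finset.mem_filter, Finset.mem_range] at ha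
      omega
    · intro a ha
      rw [hU, Finset.mem_filter, Finset.mem_range] at ha
      exact hfsymm a (by omega)
  have hdisj : Disjoint L U := by
    rw [Finset.disjoint_left]
    intro a haL haU
    rw [hL, Finset.mem_filter] at haL
    rw [hU, Finset.mem_filter] at haU
    have : (μ:ℝ) ≤ 2*θ := by linarith [haL.2, haU.2]
    linarith
  set T := (Finset.range (μ+1)).filter
      (fun i : ℕ => (i:ℝ) ≤ θ ∨ (μ:ℝ) - θ ≤ i) with hT
  have hTsum : ∑ i ∈ T, f i = 2 * ∑ i ∈ L, f i := by
    have : T = L ∪ U := by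
      rw [hT, hL, hU, Finset.filter_or]
    rw [this, Finset.sum_union hdisj, hUL]; ring
  have key : c * μ^2 ≤ (μ*s)^2 + (μ^2/4 - (μ*s)^2) * (∑ i ∈ T, f i) := by
    have step : ∑ i ∈ Finset.range (μ+1), f i * ((i:ℝ) - μ/2)^2
        ≤ ∑ i ∈ Finset.range (μ+1),
          ((μ*s)^2 * f i +
            (if (i:ℝ) ≤ θ ∨ (μ:ℝ) - θ ≤ i then ((μ:ℝ)^2/4 - (μ*s)^2) * f i else 0)) := by
      apply Finset.sum_le_sum
      intro i hi
      rw [Finset.mem_range] at hi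
      have hi0 : (0:ℝ) ≤ i := Nat.cast_nonneg i
      have hiμ : (i:ℝ) ≤ μ := by exact_mod_cast Nat.lt_succ_iff.mp hi
      by_cases hcase : (i:ℝ) ≤ θ ∨ (μ:ℝ) - θ ≤ i
      · rw [if_pos hcase]
        have hb : ((i:ℝ) - μ/2)^2 ≤ ((μ:ℝ)/2)^2 := by nlinarith
        have hb2 := mul_le_mul_of_nonneg_left hb (hf0 i)
        nlinarith [hb2]
      · rw [if_neg hcase]
        push_neg at hcase
        obtain ⟨h1, h2⟩ := hcase
        have hb : ((i:ℝ) - μ/2)^2 ≤ ((μ:ℝ)*s)^2 := by nlinarith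
        have hb2 := mul_le_mul_of_nonneg_left hb (hf0 i)
        nlinarith [hb2]
    calc c * μ^2 ≤ ∑ i ∈ Finset.range (μ+1), f i * ((i:ℝ) - μ/2)^2 := hvar
      _ ≤ _ := step
      _ = (μ*s)^2 * ∑ i ∈ Finset.range (μ+1), f i
            + ((μ:ℝ)^2/4 - (μ*s)^2) * ∑ i ∈ T, f i := by
          rw [Finset.sum_add_distrib, ← Finset.mul_sum]
          congr 1
          rw [hT, Finset.sum_filter, Finset.mul_sum]
          refine Finset.sum_congr rfl fun i _ => ?_
          split_ifs <;> simp
      _ = (μ*s)^2 + (μ^2/4 - (μ*s)^2) * (∑ i ∈ T, f i) := by rw [hsum]; ring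
  rw [hTsum] at key
  have hss : (0:ℝ) < 1 - 4*s^2 := by
    nlinarith [mul_pos (by linarith : (0:ℝ) < 1 - 2*s) (by linarith : (0:ℝ) < 1 + 2*s)]
  rw [ge_iff_le, div_le_iff₀ hss]
  by_contra hcon
  push_neg at hcon
  nlinarith [key, mul_pos hμR hμR, mul_lt_mul_of_pos_left hcon (mul_pos hμR hμR)]
end
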